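/- Let G ≤ Aut(T) be a regular branch group, let k < m be natural numbers, let u be a vertex of length m, and let H be a subgroup of G such that every element of H ∩ Stab_G(k) fixes every vertex having u as a prefix. Then H has infinite index in G. -/

import Mathlib

/-! Elements of the rigid stabilizer `rist G u` fix every vertex of level `k < |u|`, so by
hypothesis those lying in `H` fix the whole tree: `H ∩ rist G u = 1`. On the other hand
`rist G u` is infinite: `K` has finite index in the spherically transitive, hence infinite,
group `G`, and since `K^d ≤ ψ₁(K)`, every element of `K` can be planted below `u` by an
element of `K ∩ rist G u`. A subgroup of `G` meeting an infinite subgroup of `G` trivially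
has infinite index. -/

/-- Vertices of the `d`-regular rooted tree: finite words over `Fin d`. -/
abbrev Vtx (d : ℕ) := List (Fin d)

/-- A permutation of the vertex set is a tree automorphism if it fixes the root and
maps children of a vertex to children of its image. -/
def IsTreeAut (d : ℕ) (g : Equiv.Perm (Vtx d)) : Prop :=
  g [] = [] ∧ ∀ (v : Vtx d) (x : Fin d), ∃ y : Fin d, g (v ++ [x]) = g v ++ [y]

/-- The initial raySegment of length `n` of a boundary point `ξ : ℕ → Fin d`. -/
def raySegment {d : ℕ} (ξ : ℕ → Fin d) (n : ℕ) : Vtx d := List.ofFn fun i : Fin n => ξ i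

/-- The vertices at level `n`. -/
abbrev Level (d n : ℕ) := {v : Vtx d // v.length = n}

/-- A group of tree automorphisms is spherically transitive if it acts transitively on
each level. -/
def SphericallyTransitive {d : ℕ} (G : Subgroup (Equiv.Perm (Vtx d))) : Prop :=
  ∀ u v : Vtx d, u.length = v.length → ∃ g ∈ G, g u = v

/-- A group of tree automorphisms is self-similar if all sections of its elements
belong to it. -/
def SelfSimilar {d : ℕ} (G : Subgroup (Equiv.Perm (Vtx d))) : Prop :=
  ∀ g ∈ G, ∀ v : Vtx d, ∃ h ∈ G, ∀ w : Vtx d, g (v ++ w) = g v ++ h w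

/-- The image of `H ∩ Stab(n)` under the map `ψₙ` sending an automorphism fixing level `n`
to the tuple of its sections at the vertices of level `n`. -/
def psiImage {d : ℕ} (H : Subgroup (Equiv.Perm (Vtx d))) (n : ℕ) :
    Subgroup (Level d n → Equiv.Perm (Vtx d)) where
  carrier := {h | ∃ g ∈ H, (∀ v : Level d n, g v.1 = v.1) ∧
      ∀ (v : Level d n) (w : Vtx d), g (v.1 ++ w) = v.1 ++ h v w}
  one_mem' := ⟨1, H.one_mem, fun _ => rfl, fun _ _ => rfl⟩
  mul_mem' := by
    rintro a b ⟨g, hg, hgf, hga⟩ ⟨g', hg', hg'f, hg'a⟩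
    refine ⟨g * g', H.mul_mem hg hg', fun v => ?_, fun v w => ?_⟩
    · rw [Equiv.Perm.mul_apply, hg'f v, hgf v]
    · rw [Equiv.Perm.mul_apply, hg'a v w, hga v (b v w)]; rfl
  inv_mem' := by
    rintro a ⟨g, hg, hgf, hga⟩
    refine ⟨g⁻¹, H.inv_mem hg, fun v => ?_, fun v w => ?_⟩
    · apply g.injective
      rw [show ∀ x, g (g⁻¹ x) = x from Equiv.apply_symm_apply g, hgf v]
    · apply g.injective
      rw [show ∀ x, g (g⁻¹ x) = x from Equiv.apply_symm_apply g, hga v (a⁻¹ v w)]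
      show v.1 ++ w = v.1 ++ a v ((a v)⁻¹ w)
      rw [show ∀ x, a v ((a v)⁻¹ x) = x from Equiv.apply_symm_apply (a v)]

/-- `G ≤ Aut(T)` is regular branch over `K` if it consists of tree automorphisms, is
spherically transitive and self-similar, and `K ≤ G` is a finite-index subgroup such that
`ψ₁(K ∩ Stab(1))` contains `K^d` as a subgroup of finite index. -/
structure IsRegularBranch (d : ℕ) (G K : Subgroup (Equiv.Perm (Vtx d))) : Prop where
  treeAut : ∀ g ∈ G, IsTreeAut d g
  transitive : SphericallyTransitive G
  selfSimilar : SelfSimilar G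
  le : K ≤ G
  relindex_ne_zero : K.relIndex G ≠ 0
  pi_le : Subgroup.pi Set.univ (fun _ : Level d 1 => K) ≤ psiImage K 1
  pi_relindex_ne_zero :
    (Subgroup.pi Set.univ (fun _ : Level d 1 => K)).relIndex (psiImage K 1) ≠ 0

/-- `H` is a weakly maximal subgroup of (the subgroup) `G` if `H ≤ G`, `H` has infinite
index in `G`, and every subgroup of `G` strictly containing `H` has finite index in `G`. -/
def IsWeaklyMaximalIn {P : Type*} [Group P] (G H : Subgroup P) : Prop :=
  H ≤ G ∧ H.relIndex G = 0 ∧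
    ∀ M : Subgroup P, M ≤ G → H < M → M.relIndex G ≠ 0

/-- The stabilizer in `G` of a boundary point `ξ` (a parabolic subgroup). -/
def rayStab {d : ℕ} (G : Subgroup (Equiv.Perm (Vtx d))) (ξ : ℕ → Fin d) :
    Subgroup (Equiv.Perm (Vtx d)) where
  carrier := {g | g ∈ G ∧ ∀ n : ℕ, g (raySegment ξ n) = raySegment ξ n}
  one_mem' := ⟨G.one_mem, fun _ => rfl⟩
  mul_mem' := by
    rintro a b ⟨ha, ha2⟩ ⟨hb, hb2⟩
    exact ⟨G.mul_mem ha hb, fun n => by rw [Equiv.Perm.mul_apply, hb2 n, ha2 n]⟩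
  inv_mem' := by
    rintro a ⟨ha, ha2⟩
    refine ⟨G.inv_mem ha, fun n => ?_⟩
    conv_lhs => rw [← ha2 n]
    exact Equiv.symm_apply_apply a (raySegment ξ n)

/-- The rigid stabilizer of a vertex `v` in `G`: elements of `G` fixing every vertex not
having `v` as a prefix. -/
def rist {d : ℕ} (G : Subgroup (Equiv.Perm (Vtx d))) (v : Vtx d) :
    Subgroup (Equiv.Perm (Vtx d)) where
  carrier := {g | g ∈ G ∧ ∀ w : Vtx d, ¬ v <+: w → g w = w}
  one_mem' := ⟨G.one_mem, fun _ _ => rfl⟩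
  mul_mem' := by
    rintro a b ⟨ha, ha2⟩ ⟨hb, hb2⟩
    exact ⟨G.mul_mem ha hb, fun w hw => by rw [Equiv.Perm.mul_apply, hb2 w hw, ha2 w hw]⟩
  inv_mem' := by
    rintro a ⟨ha, ha2⟩
    refine ⟨G.inv_mem ha, fun w hw => ?_⟩
    conv_lhs => rw [← ha2 w hw]
    exact Equiv.symm_apply_apply a w

namespace Subgroup

variable {P : Type*} [Group P]

theorem infinite_of_relIndex_ne_zero {K G : Subgroup P} [Infinite G] (hKG : K ≤ G)
    (hK : K.relIndex G ≠ 0) : Infinite K := by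
  have hcard := relIndex_mul_relIndex ⊥ K G bot_le hKG
  rw [relIndex_bot_left, relIndex_bot_left, Nat.card_eq_zero_of_infinite (α := G),
    mul_eq_zero, or_iff_left hK, Nat.card_eq_zero] at hcard
  exact hcard.resolve_left (not_isEmpty_of_nonempty K)

theorem relIndex_eq_zero_of_inf_eq_bot {H L G : Subgroup P} [Infinite L] (hLG : L ≤ G)
    (hHL : H ⊓ L = ⊥) : H.relIndex G = 0 :=
  relIndex_eq_zero_of_le_right hLG <| by
    rw [← inf_relIndex_right, hHL, relIndex_bot_left, Nat.card_eq_zero_of_infinite]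

end Subgroup

section

variable {d : ℕ}

theorem rist_le (G : Subgroup (Equiv.Perm (Vtx d))) (u : Vtx d) : rist G u ≤ G :=
  fun _ hg => hg.1

theorem SphericallyTransitive.infinite (hd : 2 ≤ d) {G : Subgroup (Equiv.Perm (Vtx d))}
    (hG : SphericallyTransitive G) : Infinite G := by
  refine not_finite_iff_infinite.mp fun _ => ?_
  set n := Nat.card G
  let v₀ : Vtx d := List.replicate n ⟨0, by omega⟩
  choose g hgG hg using fun v : Level d n => hG v₀ v.1 (by simp [v₀, v.2])
  have hinj : Function.Injective fun v => (⟨g v, hgG v⟩ : G) := fun v w hvw =>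
    Subtype.ext <| (hg v).symm.trans <| (congrArg (fun g : G => g.1 v₀) hvw).trans (hg w)
  have hcard : Nat.card (Level d n) = d ^ n :=
    show Nat.card (List.Vector (Fin d) n) = d ^ n by simp [Nat.card_eq_fintype_card]
  have hle : d ^ n ≤ n := hcard ▸ Nat.card_le_card_of_injective _ hinj
  exact (Nat.lt_pow_self (by omega)).not_ge hle

theorem rist_apply_eq_of_length_lt {G : Subgroup (Equiv.Perm (Vtx d))} {u v : Vtx d}
    {g : Equiv.Perm (Vtx d)} (hg : g ∈ rist G u) (hv : v.length < u.length) : g v = v :=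
  hg.2 v fun huv => (huv.length_le.trans_lt hv).false

namespace IsRegularBranch

variable {G K : Subgroup (Equiv.Perm (Vtx d))}

theorem exists_mem_rist_apply_append (hGK : IsRegularBranch d G K) (u : Vtx d)
    {h : Equiv.Perm (Vtx d)} (hh : h ∈ K) :
    ∃ g ∈ K ⊓ rist G u, ∀ w : Vtx d, g (u ++ w) = u ++ h w := by
  classical
  induction u with
  | nil => exact ⟨h, ⟨hh, hGK.le hh, fun w hw => absurd List.nil_prefix hw⟩, fun _ => rfl⟩
  | cons x u ih =>
    obtain ⟨g', ⟨hg'K, -, hg'fix⟩, hg'⟩ := ih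
    replace hg'K : g' ∈ K := hg'K
    let t : Level d 1 → Equiv.Perm (Vtx d) := fun v => if v.1 = [x] then g' else 1
    have ht : t ∈ Subgroup.pi Set.univ fun _ => K := fun v _ => by
      by_cases hv : v.1 = [x] <;> simp [t, hv, hg'K]
    obtain ⟨g, hgK, -, hgt⟩ := hGK.pi_le ht
    have hg (y : Fin d) (w : Vtx d) : g (y :: w) = y :: t ⟨[y], rfl⟩ w := hgt ⟨[y], rfl⟩ w
    refine ⟨g, ⟨hgK, hGK.le hgK, ?_⟩, fun w => by simp [hg, t, hg']⟩
    rintro (_ | ⟨y, w⟩) hw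
    · exact (hGK.treeAut g (hGK.le hgK)).1
    · by_cases hyx : y = x
      · subst hyx
        simp [hg, t, hg'fix w fun hp => hw (List.cons_prefix_cons.mpr ⟨rfl, hp⟩)]
      · simp [hg, t, hyx]

theorem infinite_rist (hd : 2 ≤ d) (hGK : IsRegularBranch d G K) (u : Vtx d) :
    Infinite (rist G u) := by
  have := hGK.transitive.infinite hd
  have := Subgroup.infinite_of_relIndex_ne_zero hGK.le hGK.relindex_ne_zero
  choose g hg hgu using fun h : K => hGK.exists_mem_rist_apply_append u h.2
  refine Infinite.of_injective (fun h => (⟨g h, (hg h).2⟩ : rist G u)) fun a b hab => ?_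
  refine Subtype.ext <| Equiv.ext fun w => List.append_cancel_left (as := u) ?_
  rw [← hgu, ← hgu, show g a = g b from congrArg Subtype.val hab]

end IsRegularBranch

end

theorem relindex_zero_of_fixes_subtree_general {d : ℕ} (hd : 2 ≤ d)
    (G K : Subgroup (Equiv.Perm (Vtx d))) (hGK : IsRegularBranch d G K)
    (k m : ℕ) (hkm : k < m) (u : Vtx d) (hu : u.length = m)
    (H : Subgroup (Equiv.Perm (Vtx d)))
    (hfix : ∀ g ∈ H, (∀ v : Vtx d, v.length = k → g v = v) →
      ∀ w : Vtx d, u <+: w → g w = w) :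
    H.relIndex G = 0 := by
  have hHrist : H ⊓ rist G u = ⊥ := by
    refine (Subgroup.eq_bot_iff_forall _).2 fun g ⟨hgH, hgu⟩ => Equiv.ext fun w => ?_
    by_cases hw : u <+: w
    · exact hfix g hgH (fun v hv => rist_apply_eq_of_length_lt hgu (by omega)) w hw
    · exact hgu.2 w hw
  have := hGK.infinite_rist hd u
  exact Subgroup.relIndex_eq_zero_of_inf_eq_bot (rist_le G u) hHrist

/-- If every element of `H ∩ Stab_G(k)` fixes the subtree below a vertex `u` of level
`m > k`, then `H` has infinite index in the regular branch group `G`. -/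
theorem relindex_zero_of_fixes_subtree {d : ℕ} (hd : 2 ≤ d)
    (G K : Subgroup (Equiv.Perm (Vtx d))) (hGK : IsRegularBranch d G K)
    (k m : ℕ) (hkm : k < m) (u : Vtx d) (hu : u.length = m)
    (H : Subgroup (Equiv.Perm (Vtx d))) (hHG : H ≤ G)
    (hfix : ∀ g ∈ H, (∀ v : Vtx d, v.length = k → g v = v) →
      ∀ w : Vtx d, u <+: w → g w = w) :
    H.relIndex G = 0 :=
  relindex_zero_of_fixes_subtree_general hd G K hGK k m hkm u hu H hfix
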